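/- arXiv:1203.5512 — 4 statements merged into one kernel-verified Lean document; each statement's English description precedes it below -/
import Mathlib

section
/- Let (M⁴,g) be a compact Einstein 4-manifold with scal ≥ 0 and (N,h) a Riemannian manifold with nonpositive sectional curvature. If φ : M → N is conformal-harmonic (i.e. δdδTφ + (1/6)scal·δTφ − 𝒮(δTφ) = 0, using Ric = (scal/4)g), then φ is harmonic, i.e. δTφ = 0. -/
/-!
STATEMENT 6: Let (M⁴,g) be a compact Einstein 4-manifold with scal ≥ 0 and (N,h)
of nonpositive sectional curvature.  If φ is conformal-harmonic, i.e.
δdδTφ + (1/6)scal·δTφ − 𝒮(δTφ) = 0, then φ is harmonic: δTφ = 0.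

Model: V = L²-sections of φ*TN, W = L²-valued 1-forms, with their (integrated)
inner products; d : V → W and its formal adjoint δ : W → V (⟪δw, v⟫ = ⟪w, dv⟫,
encoding integration by parts on the compact M); 𝒮 satisfies ⟪𝒮v, v⟫ ≤ 0
(nonpositive sectional curvature of h); τ = δTφ where Tφ ∈ W.
-/

open scoped RealInnerProductSpace

theorem stmt_6 {V W : Type*}
    [NormedAddCommGroup V] [InnerProductSpace ℝ V]
    [NormedAddCommGroup W] [InnerProductSpace ℝ W]
    (d : V →ₗ[ℝ] W) (δ : W →ₗ[ℝ] V)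
    (hadj : ∀ (v : V) (w : W), ⟪δ w, v⟫ = ⟪w, d v⟫)
    (S : V → V) (hS : ∀ v : V, ⟪S v, v⟫ ≤ 0)
    (scal : ℝ) (hscal : 0 ≤ scal)
    (Tφ : W) (τ : V) (hτ : τ = δ Tφ)
    (heq : δ (d τ) + (scal / 6) • τ - S τ = 0) :
    τ = 0 := by
  have h0 : ⟪δ (d τ) + (scal / 6) • τ - S τ, τ⟫ = 0 := by rw [heq]; simp
  have h1 : ⟪δ (d τ), τ⟫ = ⟪d τ, d τ⟫ := hadj τ (d τ)
  have h2 : ⟪δ (d τ) + (scal / 6) • τ - S τ, τ⟫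
      = ⟪d τ, d τ⟫ + (scal / 6) * ⟪τ, τ⟫ - ⟪S τ, τ⟫ := by
    rw [inner_sub_left, inner_add_left, h1, real_inner_smul_left]
  have hττ : (0:ℝ) ≤ ⟪τ, τ⟫ := real_inner_self_nonneg
  have hd : ⟪d τ, d τ⟫ ≤ 0 := by nlinarith [hS τ]
  have hd0 : d τ = 0 := by
    have := real_inner_self_nonneg (x := d τ)
    have : ⟪d τ, d τ⟫ = 0 := le_antisymm hd this
    exact inner_self_eq_zero.mp this
  have : ⟪τ, τ⟫ = 0 := by
    rw [hτ, hadj, ← hτ, hd0, inner_zero_right]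
  exact inner_self_eq_zero.mp this
end

section
/- Let φ̃ be an asymptotically harmonic map on the Poincaré metric g₊ = r^{-2}(dr² + g_r) over an even-dimensional conformal manifold (Mⁿ,[g]), with δ^{g₊}Tφ̃ = O(r²). Then the first normal derivative of φ̃ at r = 0 vanishes: φ^{(1)} := [∂_rφ̃]_{r=0} = 0. Moreover, for n ≠ 2, the second normal derivative is φ^{(2)} = (1/(2−n)) δ^g Tφ, where φ = φ̃|_{r=0}. -/
/-!
Divide the tension identity by `r` and let `r → 0`: since `τ = o(r²)` the left side tends to
`0`, the right side to `(n - 1) ψ(0)`, so `ψ(0) = 0`. Dividing instead by `r²`, the term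
`(n - 1) r⁻¹ ψ(r)` becomes a difference quotient of `ψ` at `0`, so the limit reads
`δ^g Tφ - φ⁽²⁾ + (n - 1) φ⁽²⁾ = 0`, which is solvable for `φ⁽²⁾` when `n ≠ 2`.
-/

open Topology Filter Asymptotics

theorem Asymptotics.IsLittleO.eq_zero_of_tendsto_inv_smul {α 𝕜 E : Type*} [NormedDivisionRing 𝕜]
    [NormedAddCommGroup E] [Module 𝕜 E] [NormSMulClass 𝕜 E] {l : Filter α} [l.NeBot]
    {f : α → E} {g : α → 𝕜} {L : E} (h : f =o[l] g)
    (hL : Tendsto (fun x => (g x)⁻¹ • f x) l (𝓝 L)) : L = 0 :=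
  tendsto_nhds_unique hL h.tendsto_inv_smul_nhds_zero

section TensionIdentity

variable {V : Type*} [NormedAddCommGroup V] [NormedSpace ℝ V] {τ ψ B : ℝ → V} {c : ℝ}

theorem apply_zero_eq_zero_of_isLittleO_sq (hid : ∀ r, τ r = r ^ 2 • B r + (c * r) • ψ r)
    (hτ : τ =o[𝓝 0] fun r => r ^ 2) (hB : ContinuousAt B 0) (hψ : ContinuousAt ψ 0)
    (hc : c ≠ 0) : ψ 0 = 0 := by
  have hτ₁ : τ =o[𝓝[≠] 0] fun r => r := by
    have hsq : (fun r : ℝ => r ^ 2) =O[𝓝 0] fun r => r := by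
      simpa using (isLittleO_pow_pow (𝕜 := ℝ) one_lt_two).isBigO
    exact (hτ.trans_isBigO hsq).mono nhdsWithin_le_nhds
  have hlim : Tendsto (fun r => r • B r + c • ψ r) (𝓝[≠] 0) (𝓝 (c • ψ 0)) := by
    have h := (tendsto_id.smul hB.tendsto).add (hψ.tendsto.const_smul c)
    simpa using h.mono_left nhdsWithin_le_nhds
  have hquot : ∀ᶠ r in 𝓝[≠] (0 : ℝ), r • B r + c • ψ r = r⁻¹ • τ r := by
    filter_upwards [self_mem_nhdsWithin] with r (hr : r ≠ 0)
    rw [hid, smul_add, smul_smul, smul_smul]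
    congr 2 <;> field_simp
  exact (smul_eq_zero.mp (hτ₁.eq_zero_of_tendsto_inv_smul (hlim.congr' hquot))).resolve_left hc

theorem add_smul_eq_zero_of_isLittleO_sq (hid : ∀ r, τ r = r ^ 2 • B r + (c * r) • ψ r)
    (hτ : τ =o[𝓝 0] fun r => r ^ 2) (hB : ContinuousAt B 0) {ψ' : V}
    (hψ' : HasDerivAt ψ ψ' 0) (hψ0 : ψ 0 = 0) : B 0 + c • ψ' = 0 := by
  have hslope : Tendsto (fun r => r⁻¹ • ψ r) (𝓝[≠] 0) (𝓝 ψ') := by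
    refine (hasDerivAt_iff_tendsto_slope.mp hψ').congr fun r => ?_
    simp [slope, hψ0]
  have hlim : Tendsto (fun r => B r + c • r⁻¹ • ψ r) (𝓝[≠] 0) (𝓝 (B 0 + c • ψ')) :=
    (hB.tendsto.mono_left nhdsWithin_le_nhds).add (hslope.const_smul c)
  have hquot : ∀ᶠ r in 𝓝[≠] (0 : ℝ), B r + c • r⁻¹ • ψ r = (r ^ 2)⁻¹ • τ r := by
    filter_upwards [self_mem_nhdsWithin] with r (hr : r ≠ 0)
    rw [hid, smul_add, smul_smul, smul_smul, smul_smul, inv_mul_cancel₀ (pow_ne_zero 2 hr),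
      one_smul]
    congr 1
    field_simp
  exact (hτ.mono nhdsWithin_le_nhds).eq_zero_of_tendsto_inv_smul (hlim.congr' hquot)

end TensionIdentity

theorem stmt_11_general {V : Type*} [NormedAddCommGroup V] [NormedSpace ℝ V]
    (n : ℕ) (hn : 1 < n)
    (τ ψ A Cov : ℝ → V) (t : ℝ → ℝ)
    (hid : ∀ r : ℝ, τ r = r ^ 2 • (A r - t r • ψ r - Cov r) + (((n : ℝ) - 1) * r) • ψ r)
    (hτ : Asymptotics.IsLittleO (𝓝 (0 : ℝ)) τ (fun r => r ^ 2))
    (hA : ContinuousAt A 0)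
    (ht : ContinuousAt t 0) (hCov : ContinuousAt Cov 0)
    (ht0 : t 0 = 0)
    (δTφ φ2 : V) (hA0 : A 0 = δTφ) (hCov0 : Cov 0 = φ2)
    (hψd : HasDerivAt ψ φ2 0) :
    ψ 0 = 0 ∧ (n ≠ 2 → φ2 = ((1 : ℝ) / (2 - (n : ℝ))) • δTφ) := by
  have hψ := hψd.continuousAt
  have hB : ContinuousAt (fun r => A r - t r • ψ r - Cov r) 0 := (hA.sub (ht.smul hψ)).sub hCov
  have hn1 : (n : ℝ) - 1 ≠ 0 := sub_ne_zero.mpr (by exact_mod_cast hn.ne')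
  have hψ0 := apply_zero_eq_zero_of_isLittleO_sq hid hτ hB hψ hn1
  refine ⟨hψ0, fun hn2 => ?_⟩
  have hlim := add_smul_eq_zero_of_isLittleO_sq hid hτ hB hψd hψ0
  simp only [hA0, ht0, hψ0, hCov0, smul_zero, sub_zero] at hlim
  have hn2' : 2 - (n : ℝ) ≠ 0 := sub_ne_zero.mpr (by exact_mod_cast hn2.symm)
  have hsolve : (2 - (n : ℝ)) • φ2 = δTφ := by
    rw [← sub_eq_zero, ← neg_eq_zero, ← hlim]
    module
  rw [← hsolve, one_div, smul_smul, inv_mul_cancel₀ hn2', one_smul]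

theorem stmt_11 {V : Type*} [NormedAddCommGroup V] [NormedSpace ℝ V]
    (n : ℕ) (hn : 1 < n)
    (τ ψ A Cov : ℝ → V) (t : ℝ → ℝ)
    (hid : ∀ r : ℝ, τ r = r ^ 2 • (A r - t r • ψ r - Cov r) + (((n : ℝ) - 1) * r) • ψ r)
    (hτ : Asymptotics.IsLittleO (𝓝 (0 : ℝ)) τ (fun r => r ^ 2))
    (hA : ContinuousAt A 0) (hψ : ContinuousAt ψ 0)
    (ht : ContinuousAt t 0) (hCov : ContinuousAt Cov 0)
    (ht0 : t 0 = 0)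
    (δTφ φ2 : V) (hA0 : A 0 = δTφ) (hCov0 : Cov 0 = φ2)
    (hψd : HasDerivAt ψ φ2 0) :
    ψ 0 = 0 ∧ (n ≠ 2 → φ2 = ((1 : ℝ) / (2 - (n : ℝ))) • δTφ) :=
  stmt_11_general n hn τ ψ A Cov t hid hτ hA ht hCov ht0 δTφ φ2 hA0 hCov0 hψd
end

section
/- The variation of the tension field with respect to the domain metric: for a fixed smooth map φ : M → N and a variation g_t of metrics with g_0 = g, ∂_t g_t|_{t=0} = ġ, one has ∂_t(δ^{g_t}Tφ)|_{t=0} = −δ^g(ġ(Tφ)) − (1/2)⟨d tr_g ġ, Tφ⟩_g, where ġ(Tφ) denotes the composition of Tφ with the g-endomorphism associated to ġ. -/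
/-!
STATEMENT 15: Variation of the tension field in the metric direction: for a fixed
smooth φ : M → N and metrics g_t with g₀ = g, ∂_t g_t|₀ = ġ,
  ∂_t(δ^{g_t}Tφ)|_{t=0} = −δ^g(ġ(Tφ)) − (1/2)⟨d tr_g ġ, Tφ⟩_g.

Model: local coordinates in which g is the Euclidean metric on
E = EuclideanSpace ℝ (Fin n) at the point considered and the target connection is
flat (N = F a normed space).  We set g_t = 1 + t·ġ (as a matrix-valued function),
define its Christoffel symbols Γ(t)ᵏᵢⱼ = (1/2)Σₗ (g_t⁻¹)ₖₗ(∂ᵢ(g_t)ₗⱼ + ∂ⱼ(g_t)ₗᵢ − ∂ₗ(g_t)ᵢⱼ)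
and the tension field δ^{g_t}Tφ = −Σᵢⱼ (g_t⁻¹)ᵢⱼ(∂ᵢ∂ⱼφ − Σₖ Γ(t)ᵏᵢⱼ ∂ₖφ).
With δ^g acting on φ*TN-valued 1-forms as δα = −Σᵢ ∂ᵢα(eᵢ), the right-hand side is
  −δ(ġ(Tφ)) − (1/2)⟨d tr ġ, Tφ⟩ = Σᵢ ∂ᵢ(Σⱼ ġᵢⱼ ∂ⱼφ) − (1/2)Σₖ ∂ₖ(tr ġ)·∂ₖφ.
-/

noncomputable section

abbrev Euc (n : ℕ) := EuclideanSpace ℝ (Fin n)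

def pd {n : ℕ} (f : Euc n → ℝ) (i : Fin n) (x : Euc n) : ℝ :=
  fderiv ℝ f x (EuclideanSpace.single i 1)

def pdv {n : ℕ} {F : Type*} [NormedAddCommGroup F] [NormedSpace ℝ F]
    (f : Euc n → F) (i : Fin n) (x : Euc n) : F :=
  fderiv ℝ f x (EuclideanSpace.single i 1)

/-- the metric `g_t = 1 + t·ġ` in coordinates. -/
def gm {n : ℕ} (gdot : Euc n → Matrix (Fin n) (Fin n) ℝ) (t : ℝ) (x : Euc n) :
    Matrix (Fin n) (Fin n) ℝ :=
  1 + t • gdot x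

/-- Christoffel symbols `Γ(t)ᵏᵢⱼ` of `g_t = 1 + t·ġ`. -/
def christoffelT {n : ℕ} (gdot : Euc n → Matrix (Fin n) (Fin n) ℝ) (t : ℝ)
    (i j k : Fin n) (x : Euc n) : ℝ :=
  (1 / 2) * ∑ l : Fin n, (gm gdot t x)⁻¹ k l *
    (t * pd (fun y => gdot y l j) i x + t * pd (fun y => gdot y l i) j x
      - t * pd (fun y => gdot y i j) l x)

/-- the tension field `δ^{g_t}Tφ` of `φ` with respect to `g_t` (flat target). -/
def tensionT {n : ℕ} {F : Type*} [NormedAddCommGroup F] [NormedSpace ℝ F]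
    (gdot : Euc n → Matrix (Fin n) (Fin n) ℝ) (φ : Euc n → F) (t : ℝ) (x : Euc n) : F :=
  -∑ i : Fin n, ∑ j : Fin n, (gm gdot t x)⁻¹ i j •
    (pdv (pdv φ j) i x - ∑ k : Fin n, christoffelT gdot t i j k x • pdv φ k x)

lemma inv_entry_deriv {n : ℕ} (A : Matrix (Fin n) (Fin n) ℝ) (i j : Fin n) :
    HasDerivAt (fun t : ℝ => (1 + t • A)⁻¹ i j) (-(A i j)) 0 := by
  letI : NormedRing (Matrix (Fin n) (Fin n) ℝ) := Matrix.linftyOpNormedRing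
  letI : NormedAlgebra ℝ (Matrix (Fin n) (Fin n) ℝ) := Matrix.linftyOpNormedAlgebra
  letI : CompleteSpace (Matrix (Fin n) (Fin n) ℝ) := FiniteDimensional.complete ℝ _
  have h1 : HasDerivAt (fun t : ℝ => (1 : Matrix (Fin n) (Fin n) ℝ) + t • A) A 0 := by
    have := ((hasDerivAt_id (0:ℝ)).smul_const A).const_add (1 : Matrix (Fin n) (Fin n) ℝ)
    simp only [id, one_smul] at this
    exact this
  have h2 := hasFDerivAt_ringInverse (𝕜 := ℝ) (1 : (Matrix (Fin n) (Fin n) ℝ)ˣ)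
  rw [Units.val_one, show (1 : Matrix (Fin n) (Fin n) ℝ) = 1 + (0:ℝ) • A by simp] at h2
  have h3 : HasDerivAt (fun t : ℝ => Ring.inverse ((1 : Matrix (Fin n) (Fin n) ℝ) + t • A)) (-A) 0 := by
    have := h2.comp_hasDerivAt 0 h1
    simp only [Function.comp_def] at this
    exact this.congr_deriv (by simp)
  have h4 : HasDerivAt (fun t : ℝ => ((1 : Matrix (Fin n) (Fin n) ℝ) + t • A)⁻¹) (-A) 0 := by
    simpa only [Matrix.nonsing_inv_eq_ringInverse] using h3
  have := (LinearMap.toContinuousLinearMap (Matrix.entryLinearMap ℝ ℝ i j)).hasFDerivAt.comp_hasDerivAt 0 h4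
  simp only [Function.comp_def] at this
  exact this.congr_deriv rfl

lemma gm_inv_entry_deriv {n : ℕ} (gdot : Euc n → Matrix (Fin n) (Fin n) ℝ) (x : Euc n)
    (i j : Fin n) :
    HasDerivAt (fun t : ℝ => (gm gdot t x)⁻¹ i j) (-(gdot x i j)) 0 :=
  inv_entry_deriv (gdot x) i j

lemma christoffel_deriv {n : ℕ} (gdot : Euc n → Matrix (Fin n) (Fin n) ℝ) (x : Euc n)
    (i j k : Fin n) :
    HasDerivAt (fun t : ℝ => christoffelT gdot t i j k x)
      ((1/2) * (pd (fun y => gdot y k j) i x + pd (fun y => gdot y k i) j x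
        - pd (fun y => gdot y i j) k x)) 0 := by
  set a := fun l => pd (fun y => gdot y l j) i x
  set b := fun l => pd (fun y => gdot y l i) j x
  set c := fun l => pd (fun y => gdot y i j) l x
  have hterm : ∀ l : Fin n, HasDerivAt
      (fun t : ℝ => (gm gdot t x)⁻¹ k l * (t * a l + t * b l - t * c l))
      ((1 : Matrix (Fin n) (Fin n) ℝ) k l * (a l + b l - c l)) 0 := fun l => by
    have hu : HasDerivAt (fun t : ℝ => t * a l + t * b l - t * c l) (a l + b l - c l) 0 := by
      have := (((hasDerivAt_id (0:ℝ)).mul_const (a l)).add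
        ((hasDerivAt_id (0:ℝ)).mul_const (b l))).sub ((hasDerivAt_id (0:ℝ)).mul_const (c l))
      simpa [Pi.add_def, Pi.sub_def] using this
    have := (gm_inv_entry_deriv gdot x k l).mul hu
    simpa [gm, Pi.mul_def] using this
  have := (HasDerivAt.fun_sum (fun l (_ : l ∈ Finset.univ) => hterm l)).const_mul (1/2 : ℝ)
  refine this.congr_deriv ?_
  symm
  rw [Finset.mul_sum]
  congr 1
  rw [Finset.sum_congr rfl (fun l _ => by rw [Matrix.one_apply])]
  simp [Finset.sum_ite_eq, mul_comm]
  rfl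

lemma christoffel_zero {n : ℕ} (gdot : Euc n → Matrix (Fin n) (Fin n) ℝ) (x : Euc n)
    (i j k : Fin n) : christoffelT gdot 0 i j k x = 0 := by
  simp [christoffelT]

theorem stmt_15 {n : ℕ} {F : Type*} [NormedAddCommGroup F] [NormedSpace ℝ F]
    (gdot : Euc n → Matrix (Fin n) (Fin n) ℝ) (φ : Euc n → F)
    (hφ : ContDiff ℝ (⊤ : ℕ∞) φ) (hg : ∀ i j, ContDiff ℝ (⊤ : ℕ∞) fun y => gdot y i j)
    (hsym : ∀ y, (gdot y).IsSymm) (x : Euc n) :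
    HasDerivAt (fun t => tensionT gdot φ t x)
      ((∑ i : Fin n, pdv (fun y => ∑ j : Fin n, gdot y i j • pdv φ j y) i x)
        - (1 / 2 : ℝ) • ∑ k : Fin n,
            pd (fun y => Matrix.trace (gdot y)) k x • pdv φ k x) 0 := by
  classical
  set C : Fin n → F := fun k => pdv φ k x with hC
  set B : Fin n → Fin n → F := fun i j => pdv (pdv φ j) i x with hB
  set P : Fin n → Fin n → Fin n → ℝ := fun i j k => pd (fun y => gdot y i j) k x with hP
  set Γ' : Fin n → Fin n → Fin n → ℝ :=
    fun i j k => (1/2) * (P k j i + P k i j - P i j k) with hΓ'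
  -- symmetry of P in the first two indices
  have hsymP : ∀ a b c, P a b c = P b a c := by
    intro a b c
    simp only [hP, pd]
    congr 2
    funext y
    exact ((hsym y).apply a b).symm ▸ rfl
  -- RHS first-term expansion
  have hRHS1 : ∀ i : Fin n, pdv (fun y => ∑ j : Fin n, gdot y i j • pdv φ j y) i x
      = ∑ j : Fin n, (P i j i • C j + gdot x i j • B i j) := by
    intro i
    have hdφ : ∀ j, ContDiff ℝ (⊤ : ℕ∞) (fun y => pdv φ j y) := fun j =>
      (hφ.fderiv_right (by simp)).clm_apply contDiff_const
    have H : HasFDerivAt (fun y => ∑ j : Fin n, gdot y i j • pdv φ j y)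
        (∑ j : Fin n, (gdot x i j • fderiv ℝ (fun y => pdv φ j y) x
          + (fderiv ℝ (fun y => gdot y i j) x).smulRight (pdv φ j x))) x :=
      HasFDerivAt.fun_sum fun j _ =>
        (((hg i j).differentiable (by simp) x).hasFDerivAt).smul
          (((hdφ j).differentiable (by simp) x).hasFDerivAt)
    rw [pdv, H.fderiv]
    simp only [ContinuousLinearMap.sum_apply, ContinuousLinearMap.add_apply,
      ContinuousLinearMap.smul_apply, ContinuousLinearMap.smulRight_apply]
    refine Finset.sum_congr rfl fun j _ => ?_
    rw [add_comm]
    rfl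
  -- trace term expansion
  have hTr : ∀ k : Fin n, pd (fun y => Matrix.trace (gdot y)) k x = ∑ i : Fin n, P i i k := by
    intro k
    have H : HasFDerivAt (fun y => Matrix.trace (gdot y))
        (∑ i : Fin n, fderiv ℝ (fun y => gdot y i i) x) x := by
      have := HasFDerivAt.fun_sum (fun i (_ : i ∈ (Finset.univ : Finset (Fin n))) =>
        ((hg i i).differentiable (by simp) x).hasFDerivAt)
      simpa [Matrix.trace, Matrix.diag] using this
    rw [pd, H.fderiv]
    simp [ContinuousLinearMap.sum_apply, hP, pd]
  -- derivative construction
  have hinner : ∀ i j : Fin n, HasDerivAt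
      (fun t => pdv (pdv φ j) i x - ∑ k : Fin n, christoffelT gdot t i j k x • pdv φ k x)
      (-(∑ k : Fin n, Γ' i j k • C k)) 0 := fun i j =>
    (HasDerivAt.fun_sum fun k _ => (christoffel_deriv gdot x i j k).smul_const (pdv φ k x)).const_sub _
  have hsmul : ∀ i j : Fin n, HasDerivAt
      (fun t => (gm gdot t x)⁻¹ i j •
        (pdv (pdv φ j) i x - ∑ k : Fin n, christoffelT gdot t i j k x • pdv φ k x))
      ((if i = j then (1:ℝ) else 0) • (-(∑ k : Fin n, Γ' i j k • C k))
        + (-(gdot x i j)) • B i j) 0 := fun i j => by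
    have h := (gm_inv_entry_deriv gdot x i j).smul (hinner i j)
    simp only [gm, zero_smul, add_zero, inv_one, Matrix.one_apply, christoffel_zero,
      Finset.sum_const_zero, sub_zero] at h
    exact h
  have total := (HasDerivAt.fun_sum fun i (_ : i ∈ (Finset.univ : Finset (Fin n))) =>
      HasDerivAt.fun_sum fun j (_ : j ∈ (Finset.univ : Finset (Fin n))) => hsmul i j).neg
  suffices hkey : (∑ i : Fin n, pdv (fun y => ∑ j : Fin n, gdot y i j • pdv φ j y) i x)
        - (1 / 2 : ℝ) • ∑ k : Fin n, pd (fun y => Matrix.trace (gdot y)) k x • C k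
      = -∑ i : Fin n, ∑ j : Fin n,
          ((if i = j then (1:ℝ) else 0) • (-(∑ k : Fin n, Γ' i j k • C k))
            + (-(gdot x i j)) • B i j) by
    rw [hkey]
    exact total
  -- now pure algebra
  rw [Finset.sum_congr rfl fun i _ => hRHS1 i,
    show (∑ k : Fin n, pd (fun y => Matrix.trace (gdot y)) k x • C k)
        = ∑ k : Fin n, (∑ i : Fin n, P i i k) • C k from
      Finset.sum_congr rfl fun k _ => by rw [hTr k]]
  have hD : -∑ i : Fin n, ∑ j : Fin n,
        ((if i = j then (1:ℝ) else 0) • (-(∑ k : Fin n, Γ' i j k • C k))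
          + (-(gdot x i j)) • B i j)
      = (∑ i : Fin n, ∑ k : Fin n, Γ' i i k • C k)
        + ∑ i : Fin n, ∑ j : Fin n, gdot x i j • B i j := by
    simp only [ite_smul, one_smul, zero_smul, Finset.sum_add_distrib,
      Finset.sum_ite_eq, Finset.mem_univ, if_true, neg_smul, neg_neg,
      Finset.sum_neg_distrib, neg_add_rev]
    abel
  rw [hD]
  have key : ∑ i : Fin n, ∑ k : Fin n, Γ' i i k • C k
      = (∑ i : Fin n, ∑ j : Fin n, P i j i • C j)
        - (1/2 : ℝ) • ∑ k : Fin n, (∑ i : Fin n, P i i k) • C k := by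
    have e1 : ∀ i k : Fin n, Γ' i i k • C k
        = P i k i • C k - ((1/2 : ℝ) * P i i k) • C k := by
      intro i k
      simp only [hΓ']
      rw [hsymP k i i,
        show (1/2 : ℝ) * (P i k i + P i k i - P i i k)
          = P i k i - (1/2 : ℝ) * P i i k by ring, sub_smul]
    rw [Finset.sum_congr rfl fun i _ => Finset.sum_congr rfl fun k _ => e1 i k]
    simp only [Finset.sum_sub_distrib]
    congr 1
    rw [Finset.sum_comm, Finset.smul_sum]
    refine Finset.sum_congr rfl fun k _ => ?_
    rw [← Finset.sum_smul, ← Finset.mul_sum, smul_smul]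
  rw [key]
  simp only [Finset.sum_add_distrib]
  abel

end
end

section
/- Let (X^{n+1}, g₊) with n even be such that g₊ = r^{-2}(dr² + g_r) near the boundary M, and let φ̃ : X̄ → N be a map of class Cⁿ on X̄ that is harmonic with respect to g₊. If the normal-coordinate representative U = exp^{-1}_{φ∘p_M}∘φ̃ admits an asymptotic expansion U = U₂r² + ⋯ + U_{n−2}r^{n−2} + H^g rⁿ log r + O(rⁿ), then H^g = 0; i.e. Cⁿ-regularity up to the boundary of a harmonic map forces the conformal-harmonicity of its boundary value φ = φ̃|_M. -/
/-!
Subtracting the Taylor polynomial from the expansion, `(rⁿ log r) • H` differs from a polynomial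
`∑_{k ≤ n} r^k a_k` by `O(rⁿ)`. As `rⁿ log r = o(rⁿ⁻¹)`, that polynomial is `o(rⁿ⁻¹)` at `0⁺`,
which kills its coefficients of degree `< n` (the constant term is the limit at `0`; divide by
`r` and repeat). Hence `(rⁿ log r) • H = O(rⁿ)`, i.e. `(log r) • H` stays bounded as `r → 0⁺`,
which forces `H = 0` because `|log r| → ∞`.
-/

open Topology Filter Asymptotics Finset

section

variable {V : Type*} [NormedAddCommGroup V] [NormedSpace ℝ V]

lemma sum_range_succ_pow_smul (a : ℕ → V) (N : ℕ) (r : ℝ) :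
    ∑ k ∈ range (N + 1), r ^ k • a k = a 0 + r • ∑ k ∈ range N, r ^ k • a (k + 1) := by
  simp only [sum_range_succ', pow_zero, one_smul, smul_sum, smul_smul, pow_succ']
  abel

lemma tendsto_sum_pow_smul_nhdsGT_zero (a : ℕ → V) (N : ℕ) :
    Tendsto (fun r : ℝ => ∑ k ∈ range (N + 1), r ^ k • a k) (𝓝[>] 0) (𝓝 (a 0)) := by
  have hcont : Continuous fun r : ℝ => ∑ k ∈ range (N + 1), r ^ k • a k := by fun_prop
  simpa [sum_range_succ_pow_smul] using (hcont.tendsto 0).mono_left nhdsWithin_le_nhds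

lemma apply_zero_eq_zero_of_sum_pow_smul_isLittleO {a : ℕ → V} {N m : ℕ}
    (h : (fun r : ℝ => ∑ k ∈ range (N + 1), r ^ k • a k) =o[𝓝[>] 0] fun r => r ^ m) :
    a 0 = 0 := by
  have hpow : (fun r : ℝ => r ^ m) =O[𝓝[>] 0] fun _ => (1 : ℝ) :=
    ((continuous_pow m).tendsto 0).mono_left nhdsWithin_le_nhds |>.isBigO_one ℝ
  exact tendsto_nhds_unique (tendsto_sum_pow_smul_nhdsGT_zero a N)
    ((isLittleO_one_iff ℝ).1 (h.trans_isBigO hpow))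

lemma isLittleO_pow_of_smul_isLittleO_pow_succ {f : ℝ → V} {m : ℕ}
    (h : (fun r => r • f r) =o[𝓝[>] 0] fun r => r ^ (m + 1)) :
    f =o[𝓝[>] 0] fun r => r ^ m := by
  have hpos : ∀ᶠ r : ℝ in 𝓝[>] 0, 0 < r := self_mem_nhdsWithin
  exact ((isBigO_refl (fun r : ℝ => r⁻¹) _).smul_isLittleO h).congr'
    (hpos.mono fun r hr => by simp only [smul_smul, inv_mul_cancel₀ hr.ne', one_smul])
    (hpos.mono fun r hr => by simp only [smul_eq_mul, pow_succ', inv_mul_cancel_left₀ hr.ne'])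

lemma eq_zero_of_sum_pow_smul_isLittleO {a : ℕ → V} {N m : ℕ}
    (h : (fun r : ℝ => ∑ k ∈ range N, r ^ k • a k) =o[𝓝[>] 0] fun r => r ^ m)
    {k : ℕ} (hkm : k ≤ m) (hkN : k < N) : a k = 0 := by
  obtain ⟨N, rfl⟩ : ∃ N', N = N' + 1 := ⟨N - 1, by omega⟩
  induction k generalizing a N m with
  | zero => exact apply_zero_eq_zero_of_sum_pow_smul_isLittleO h
  | succ k ih =>
    obtain ⟨N, rfl⟩ : ∃ N', N = N' + 1 := ⟨N - 1, by omega⟩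
    obtain ⟨m, rfl⟩ : ∃ m', m = m' + 1 := ⟨m - 1, by omega⟩
    have ha0 := apply_zero_eq_zero_of_sum_pow_smul_isLittleO h
    simp only [sum_range_succ_pow_smul a (N + 1), ha0, zero_add] at h
    exact ih (by omega) N (isLittleO_pow_of_smul_isLittleO_pow_succ h) (by omega)

lemma sum_range_eq_sum_range_ite {M : Type*} [AddCommMonoid M] (f : ℕ → M) {m N : ℕ}
    (h : m ≤ N) : ∑ k ∈ range m, f k = ∑ k ∈ range N, if k < m then f k else 0 := by
  rw [← sum_filter]
  congr
  ext k
  simp only [mem_range, mem_filter]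
  omega

lemma isBigO_smul_const_self {α : Type*} (l : Filter α) (f : α → ℝ) (v : V) :
    (fun x => f x • v) =O[l] f :=
  IsBigO.of_bound ‖v‖ (Eventually.of_forall fun x => by rw [norm_smul, mul_comm])

lemma pow_succ_mul_log_isLittleO_pow (m : ℕ) :
    (fun r : ℝ => r ^ (m + 1) * Real.log r) =o[𝓝[>] 0] fun r => r ^ m := by
  have hlog : (fun r : ℝ => Real.log r * r) =o[𝓝[>] 0] fun _ => (1 : ℝ) :=
    (isLittleO_one_iff ℝ).2 (by simpa using tendsto_log_mul_rpow_nhdsGT_zero one_pos)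
  exact ((isBigO_refl (fun r : ℝ => r ^ m) _).mul_isLittleO hlog).congr (fun r => by ring)
    fun r => mul_one _

lemma eq_zero_of_pow_mul_log_smul_isBigO {n : ℕ} {H : V}
    (h : (fun r : ℝ => (r ^ n * Real.log r) • H) =O[𝓝[>] 0] fun r => r ^ n) : H = 0 := by
  have hpos : ∀ᶠ r : ℝ in 𝓝[>] 0, 0 < r := self_mem_nhdsWithin
  have hbdd : (fun r : ℝ => Real.log r • H) =O[𝓝[>] 0] fun _ => (1 : ℝ) :=
    ((isBigO_refl (fun r : ℝ => (r ^ n)⁻¹) _).smul h).congr'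
      (hpos.mono fun r hr => by
        simp only [smul_smul, ← mul_assoc, inv_mul_cancel₀ (pow_pos hr n).ne', one_mul])
      (hpos.mono fun r hr => by simp only [smul_eq_mul, inv_mul_cancel₀ (pow_pos hr n).ne'])
  by_contra hH
  have htop : Tendsto (fun r : ℝ => ‖Real.log r • H‖) (𝓝[>] 0) atTop := by
    simp only [norm_smul, Real.norm_eq_abs]
    exact (tendsto_abs_atBot_atTop.comp Real.tendsto_log_nhdsGT_zero).atTop_mul_const
      (norm_pos_iff.2 hH)
  exact not_isBoundedUnder_of_tendsto_atTop htop ((isBigO_one_iff ℝ).1 hbdd)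

end

theorem stmt_18_general {V : Type*} [NormedAddCommGroup V] [NormedSpace ℝ V]
    (n : ℕ) (hn : 2 ≤ n) (ε : ℝ) (hε : 0 < ε)
    (U Rm : ℝ → V) (c : ℕ → V) (H : V)
    (hexp : ∀ r ∈ Set.Ioo (0 : ℝ) ε,
      U r = (∑ k ∈ Finset.range (n - 1), r ^ k • c k) + (r ^ n * Real.log r) • H + Rm r)
    (hRm : Asymptotics.IsBigO (𝓝[>] (0 : ℝ)) Rm (fun r => r ^ n))
    (hreg : ∃ P : ℕ → V, Asymptotics.IsLittleO (𝓝[>] (0 : ℝ))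
      (fun r => U r - ∑ k ∈ Finset.range (n + 1), r ^ k • P k) (fun r => r ^ n)) :
    H = 0 := by
  obtain ⟨P, hP⟩ := hreg
  obtain ⟨m, rfl⟩ : ∃ m, n = m + 1 := ⟨n - 1, by omega⟩
  have hlow : ∀ {f : ℝ → V}, f =O[𝓝[>] 0] (fun r => r ^ (m + 1)) →
      f =o[𝓝[>] 0] fun r => r ^ m :=
    fun hf => hf.trans_isLittleO ((isLittleO_pow_pow (lt_add_one m)).mono nhdsWithin_le_nhds)
  set a : ℕ → V := fun k => P k - if k < m then c k else 0
  set L : ℝ → V := fun r => (r ^ (m + 1) * Real.log r) • H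
  have hpoly : ∀ r ∈ Set.Ioo (0 : ℝ) ε, ∑ k ∈ range (m + 1 + 1), r ^ k • a k =
      L r + Rm r - (U r - ∑ k ∈ range (m + 1 + 1), r ^ k • P k) := fun r hr => by
    simp only [a, L, hexp r hr, smul_sub, sum_sub_distrib, Nat.add_sub_cancel, smul_ite, smul_zero,
      ← sum_range_eq_sum_range_ite _ (show m ≤ m + 1 + 1 by omega)]
    abel
  have hL : L =o[𝓝[>] 0] fun r => r ^ m :=
    (isBigO_smul_const_self _ _ H).trans_isLittleO (pow_succ_mul_log_isLittleO_pow m)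
  have hcoeff : ∀ k ≤ m, a k = 0 := fun k hk =>
    eq_zero_of_sum_pow_smul_isLittleO (((hL.add (hlow hRm)).sub (hlow hP.isBigO)).congr'
      (eventually_of_mem (Ioo_mem_nhdsGT hε) fun r hr => (hpoly r hr).symm) .rfl) hk (by omega)
  have hsum : ∀ r : ℝ, ∑ k ∈ range (m + 1 + 1), r ^ k • a k = r ^ (m + 1) • a (m + 1) :=
    fun r => by
      rw [sum_range_succ, sum_eq_zero fun k hk => by
        rw [hcoeff k (Nat.lt_succ_iff.1 (mem_range.1 hk)), smul_zero], zero_add]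
  refine eq_zero_of_pow_mul_log_smul_isBigO
    ((((isBigO_smul_const_self _ _ (a (m + 1))).sub hRm).add hP.isBigO).congr' ?_ .rfl)
  filter_upwards [Ioo_mem_nhdsGT hε] with r hr
  rw [← hsum, hpoly r hr]
  abel

theorem stmt_18 {V : Type*} [NormedAddCommGroup V] [NormedSpace ℝ V]
    (n : ℕ) (hn : 2 ≤ n) (hne : Even n) (ε : ℝ) (hε : 0 < ε)
    (U Rm : ℝ → V) (c : ℕ → V) (H : V)
    (hexp : ∀ r ∈ Set.Ioo (0 : ℝ) ε,
      U r = (∑ k ∈ Finset.range (n - 1), r ^ k • c k) + (r ^ n * Real.log r) • H + Rm r)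
    (hRm : Asymptotics.IsBigO (𝓝[>] (0 : ℝ)) Rm (fun r => r ^ n))
    (hreg : ∃ P : ℕ → V, Asymptotics.IsLittleO (𝓝[>] (0 : ℝ))
      (fun r => U r - ∑ k ∈ Finset.range (n + 1), r ^ k • P k) (fun r => r ^ n)) :
    H = 0 :=
  stmt_18_general n hn ε hε U Rm c H hexp hRm hreg
end
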